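/- Let n ≥ 3, let R > 0, and let 0 ≤ θ₁ < θ₂ < … < θₙ < 2π be angles. Define points pᵢ = (R cos θᵢ, R sin θᵢ) in ℝ² and edge vectors vᵢ = p_{i+1} − pᵢ (indices mod n, so vₙ = p₁ − pₙ). Then the vectors v₁, …, vₙ sum to zero, and no two of them are positively proportional: for i ≠ j there is no real c > 0 with vᵢ = c • vⱼ. -/
import Mathlib


open Real

/-- Two vectors are positively proportional if one is a positive scalar multiple
of the other. -/
def PosProportional {V : Type*} [AddCommGroup V] [Module ℝ V] (u v : V) : Prop :=
  ∃ c : ℝ, 0 < c ∧ u = c • v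

/-- **The edge vectors of a convex cyclic polygon are equilibrated.**
For `n ≥ 3` distinct points `pᵢ = (R cos θᵢ, R sin θᵢ)` in cyclic order on a
circle of radius `R > 0` (angles `0 ≤ θ₁ < θ₂ < ⋯ < θₙ < 2π`), the edge
vectors `vᵢ = p_{i+1} - pᵢ` (indices mod `n`) sum to zero, and no two of them
are positively proportional. -/
theorem cyclic_polygon_edges_equilibrated (n : ℕ) (hn : 3 ≤ n) (R : ℝ)
    (hR : 0 < R) (θ : Fin n → ℝ) (hmono : StrictMono θ)
    (hrange : ∀ i, 0 ≤ θ i ∧ θ i < 2 * π)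
    (p : Fin n → ℝ × ℝ) (hp : ∀ i, p i = (R * cos (θ i), R * sin (θ i)))
    (v : Fin n → ℝ × ℝ)
    (hv : ∀ i : Fin n, v i = p ⟨((i : ℕ) + 1) % n, Nat.mod_lt _ (by omega)⟩ - p i) :
    (∑ i, v i) = 0 ∧
    (∀ i j, i ≠ j → ¬ PosProportional (v i) (v j)) := by
  have hn0 : 0 < n := by omega
  haveI : NeZero n := ⟨by omega⟩
  have hπ : (0:ℝ) < π := Real.pi_pos
  obtain ⟨φ, hφ⟩ : ∃ φ : Fin n → ℝ, ∀ i : Fin n,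
      (∀ h : (i:ℕ)+1 < n, φ i = (θ i + θ ⟨(i:ℕ)+1, h⟩)/2) ∧
      ((i:ℕ)+1 = n → φ i = (θ i + θ ⟨0, hn0⟩ + 2*π)/2) := by
    refine ⟨fun i => if h : (i:ℕ)+1 < n then (θ i + θ ⟨(i:ℕ)+1, h⟩)/2
      else (θ i + θ ⟨0, hn0⟩ + 2*π)/2, fun i => ⟨fun h => dif_pos h, fun h => dif_neg (by omega)⟩⟩
  have hedge : ∀ i : Fin n, ∃ r : ℝ, 0 < r ∧ v i = r • (-Real.sin (φ i), Real.cos (φ i)) := by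
    intro i
    by_cases h : (i:ℕ)+1 < n
    · have hθ : θ i < θ ⟨(i:ℕ)+1, h⟩ := hmono (by simp [Fin.lt_def])
      have hδ1 : 0 < (θ ⟨(i:ℕ)+1, h⟩ - θ i)/2 := by linarith
      have hδ2 : (θ ⟨(i:ℕ)+1, h⟩ - θ i)/2 < π := by
        have := (hrange ⟨(i:ℕ)+1, h⟩).2; have := (hrange i).1; linarith
      have hsin := Real.sin_pos_of_pos_of_lt_pi hδ1 hδ2
      refine ⟨2*R*Real.sin ((θ ⟨(i:ℕ)+1, h⟩ - θ i)/2), by nlinarith, ?_⟩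
      have hnext : (⟨((i:ℕ)+1) % n, Nat.mod_lt _ (by omega)⟩ : Fin n) = ⟨(i:ℕ)+1, h⟩ := by
        ext; exact Nat.mod_eq_of_lt h
      rw [hv i, hnext, hp i, hp ⟨(i:ℕ)+1, h⟩, (hφ i).1 h,
        show (θ i + θ ⟨(i:ℕ)+1, h⟩)/2 = (θ ⟨(i:ℕ)+1, h⟩ + θ i)/2 by ring]
      have c1 := Real.cos_sub_cos (θ ⟨(i:ℕ)+1, h⟩) (θ i)
      have c2 := Real.sin_sub_sin (θ ⟨(i:ℕ)+1, h⟩) (θ i)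
      rw [Prod.mk_sub_mk, Prod.smul_mk]
      refine Prod.ext ?_ ?_ <;> simp only [smul_eq_mul]
      · linear_combination R * c1
      · linear_combination R * c2
    · have hi : (i:ℕ)+1 = n := by have := i.isLt; omega
      have hθz : θ ⟨0, hn0⟩ < θ i := hmono (by rw [Fin.lt_def]; show 0 < (i:ℕ); omega)
      have hθ : θ i < θ ⟨0, hn0⟩ + 2*π := by
        have := (hrange i).2; have := (hrange ⟨0, hn0⟩).1; linarith
      have hδ1 : 0 < (θ ⟨0, hn0⟩ + 2*π - θ i)/2 := by linarith
      have hδ2 : (θ ⟨0, hn0⟩ + 2*π - θ i)/2 < π := by linarith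
      have hsin := Real.sin_pos_of_pos_of_lt_pi hδ1 hδ2
      refine ⟨2*R*Real.sin ((θ ⟨0, hn0⟩ + 2*π - θ i)/2), by nlinarith, ?_⟩
      have hmod : ((i:ℕ)+1) % n = 0 := by rw [hi, Nat.mod_self]
      have hnext : (⟨((i:ℕ)+1) % n, Nat.mod_lt _ (by omega)⟩ : Fin n) = ⟨0, hn0⟩ :=
        Fin.val_injective (by simpa using hmod)
      rw [hv i, hnext, hp i, hp ⟨0, hn0⟩, (hφ i).2 hi,
        show (θ i + θ ⟨0, hn0⟩ + 2*π)/2 = (θ ⟨0, hn0⟩ + 2*π + θ i)/2 by ring]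
      have hca : Real.cos (θ ⟨0, hn0⟩) = Real.cos (θ ⟨0, hn0⟩ + 2*π) := (Real.cos_add_two_pi _).symm
      have hsa : Real.sin (θ ⟨0, hn0⟩) = Real.sin (θ ⟨0, hn0⟩ + 2*π) := (Real.sin_add_two_pi _).symm
      rw [hca, hsa]
      have c1 := Real.cos_sub_cos (θ ⟨0, hn0⟩ + 2*π) (θ i)
      have c2 := Real.sin_sub_sin (θ ⟨0, hn0⟩ + 2*π) (θ i)
      rw [Prod.mk_sub_mk, Prod.smul_mk]
      refine Prod.ext ?_ ?_ <;> simp only [smul_eq_mul]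
      · linear_combination R * c1
      · linear_combination R * c2
  have hgap : ∀ i j : Fin n, i < j → 0 < φ j - φ i ∧ φ j - φ i < 2*π := by
    intro i j hij
    have hij' : (i:ℕ) < (j:ℕ) := hij
    have hi : (i:ℕ)+1 < n := by have := j.isLt; omega
    have hφi : φ i = (θ i + θ ⟨(i:ℕ)+1, hi⟩)/2 := (hφ i).1 hi
    have hri1 := (hrange i).1
    have hri2 := (hrange i).2
    have hri1' := (hrange ⟨(i:ℕ)+1, hi⟩).1
    have hrj2 := (hrange j).2
    by_cases h : (j:ℕ)+1 < n
    · have hφj : φ j = (θ j + θ ⟨(j:ℕ)+1, h⟩)/2 := (hφ j).1 h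
      have h1 : θ i < θ j := hmono hij
      have h2 : θ ⟨(i:ℕ)+1, hi⟩ < θ ⟨(j:ℕ)+1, h⟩ := hmono (Fin.mk_lt_mk.mpr (by omega))
      have := (hrange ⟨(j:ℕ)+1, h⟩).2
      rw [hφi, hφj]
      constructor <;> linarith
    · have hφj : φ j = (θ j + θ ⟨0, hn0⟩ + 2*π)/2 := (hφ j).2 (by have := j.isLt; omega)
      have h1 : θ ⟨(i:ℕ)+1, hi⟩ ≤ θ j := hmono.monotone
        (by rw [Fin.le_def]; show (i:ℕ)+1 ≤ (j:ℕ); omega)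
      have h2 : θ ⟨0, hn0⟩ ≤ θ i := hmono.monotone
        (by rw [Fin.le_def]; show 0 ≤ (i:ℕ); omega)
      have := (hrange ⟨0, hn0⟩).1
      rw [hφi, hφj]
      constructor <;> linarith
  constructor
  · have hstep : ∀ i : Fin n, (⟨((i:ℕ)+1) % n, Nat.mod_lt _ (by omega)⟩ : Fin n) = i + 1 := by
      intro i
      ext
      rw [Fin.add_def, Fin.val_one', Nat.mod_eq_of_lt (show 1 < n by omega)]
    have hsum : ∑ i, v i = (∑ i : Fin n, p (i + 1)) - ∑ i, p i := by
      rw [← Finset.sum_sub_distrib]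
      exact Finset.sum_congr rfl fun i _ => by rw [hv i, hstep i]
    rw [hsum, Fintype.sum_equiv (Equiv.addRight (1 : Fin n)) (fun i => p (i+1)) p
      (fun i => rfl), sub_self]
  · rintro i j hij ⟨c, hc, hvc⟩
    obtain ⟨ri, hri, hvi⟩ := hedge i
    obtain ⟨rj, hrj, hvj⟩ := hedge j
    rw [hvi, hvj, smul_smul, Prod.ext_iff] at hvc
    simp only [Prod.smul_mk, smul_eq_mul] at hvc
    obtain ⟨e1, e2⟩ := hvc
    have e1' : ri * Real.sin (φ i) = (c*rj) * Real.sin (φ j) := by nlinarith [e1]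
    have hsq : (ri - c*rj) * (ri + c*rj) = 0 := by
      linear_combination (-(ri^2)) * Real.sin_sq_add_cos_sq (φ i)
        + (c*rj)^2 * Real.sin_sq_add_cos_sq (φ j)
        + (ri*Real.sin (φ i) + c*rj*Real.sin (φ j)) * e1'
        + (ri*Real.cos (φ i) + c*rj*Real.cos (φ j)) * e2
    have hr : ri = c * rj := by
      have hpos : (0:ℝ) < ri + c*rj := by have := mul_pos hc hrj; linarith
      rcases mul_eq_zero.mp hsq with h | h
      · linarith
      · exact absurd h hpos.ne'
    rw [hr] at e1' e2
    have hcrj : (0:ℝ) < c * rj := mul_pos hc hrj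
    have hs : Real.sin (φ i) = Real.sin (φ j) := mul_left_cancel₀ (ne_of_gt hcrj) e1'
    have hc' : Real.cos (φ i) = Real.cos (φ j) := mul_left_cancel₀ (ne_of_gt hcrj) e2
    have hcos1 : Real.cos (φ i - φ j) = 1 := by
      rw [Real.cos_sub, hs, hc']
      linear_combination Real.sin_sq_add_cos_sq (φ j)
    rcases lt_or_gt_of_ne hij with h | h
    · obtain ⟨g1, g2⟩ := hgap i j h
      have := (Real.cos_eq_one_iff_of_lt_of_lt (by linarith) (by linarith)).mp hcos1
      linarith
    · obtain ⟨g1, g2⟩ := hgap j i h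
      have := (Real.cos_eq_one_iff_of_lt_of_lt (by linarith) (by linarith)).mp hcos1
      linarith
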